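/- Let (G, D_G) be a simple Dirac Lie group (G a simple Lie group). Then either D_G is the graph of the vector bundle morphism T*G → TG induced by a multiplicative bivector field on G, or D_G = TG ⊕ {0}. -/

import Mathlib

/-!
Because `D_G` is multiplicative, left translation identifies the kernel `D_G ∩ (TG ⊕ 0)` at
every point with `𝔤₀ = {x | (x, 0) ∈ D_G(e)}`, and `𝔤₀` is `Ad`-invariant; differentiating
`g ↦ Ad g y` at `e` shows that `𝔤₀` is an ideal of `𝔤`. Simplicity leaves two cases.
If `𝔤₀ = 0`, the kernel of `D_G` vanishes everywhere; since `(v, ξ) ∈ D_G(e)` forces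
`(v, 0) ∈ D_G(e)`, the Lagrangian `D_G(e)` is `0 ⊕ 𝔤*`, multiplicativity carries this surjectivity
onto `T*G` to every point, and `D_G` is the graph of a skew, multiplicative bivector field.
If `𝔤₀ = 𝔤`, then `D_G(e) = 𝔤 ⊕ 0`, multiplicativity kills the covector part of `D_G`
everywhere, and the Lagrangian condition gives `D_G = TG ⊕ 0`.
-/

open scoped Manifold
noncomputable section
namespace DiracPaper

section LagrGen
variable {V : Type*} [NormedAddCommGroup V] [NormedSpace ℝ V]

/-- A subspace of `V ⊕ V*` is Lagrangian if it coincides with its orthogonal for the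
canonical pairing `⟨(x,ξ),(y,η)⟩ = ξ(y) + η(x)`. -/
def IsLagr (D : Submodule ℝ (V × (V →L[ℝ] ℝ))) : Prop :=
  ∀ p : V × (V →L[ℝ] ℝ), p ∈ D ↔ ∀ q ∈ D, p.2 q.1 + q.2 p.1 = 0

end LagrGen

variable {E : Type*} [NormedAddCommGroup E] [NormedSpace ℝ E]
variable {G : Type*} [TopologicalSpace G] [ChartedSpace E G] [Group G] [LieGroup 𝓘(ℝ, E) (⊤ : ℕ∞) G]

/-- The differential of left translation `L_g` at the point `h` (all tangent spaces being
identified with the model space `E`). -/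
def dL (g h : G) : E →L[ℝ] E := mfderiv 𝓘(ℝ, E) 𝓘(ℝ, E) (fun x => g * x) h

/-- The differential of right translation `R_h` at the point `g`. -/
def dR (h g : G) : E →L[ℝ] E := mfderiv 𝓘(ℝ, E) 𝓘(ℝ, E) (fun x => x * h) g

/-- The differential at the neutral element of a real valued function on `G`. -/
def d1 (f : G → ℝ) : E →L[ℝ] ℝ := mfderiv 𝓘(ℝ, E) 𝓘(ℝ, ℝ) f (1 : G)

/-- The left invariant vector field associated to `x ∈ 𝔤 = T_e G`. -/
def xL (x : E) (g : G) : E := dL g 1 x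

/-- The left invariant one-form associated to `ξ ∈ 𝔤*`: `ξ^L(g) = (T_g L_{g⁻¹})^* ξ`. -/
def leftForm (ξ : E →L[ℝ] ℝ) (g : G) : E →L[ℝ] ℝ := ξ.comp (dL g⁻¹ g)

/-- The right invariant one-form associated to `ξ ∈ 𝔤*`: `ξ^R(g) = (T_g R_{g⁻¹})^* ξ`. -/
def rightForm (ξ : E →L[ℝ] ℝ) (g : G) : E →L[ℝ] ℝ := ξ.comp (dR g⁻¹ g)

/-- The adjoint action of `G` on `𝔤 = T_e G`. -/
def Ad (g : G) : E →L[ℝ] E := mfderiv 𝓘(ℝ, E) 𝓘(ℝ, E) (fun x => g * x * g⁻¹) 1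

variable (G) in
/-- The adjoint action of `𝔤` on itself, obtained by differentiating `Ad` at `e`;
`adCLM G x y = ⁅x, y⁆`. -/
def adCLM : E →L[ℝ] E →L[ℝ] E :=
  mfderiv 𝓘(ℝ, E) 𝓘(ℝ, E →L[ℝ] E) (Ad : G → (E →L[ℝ] E)) 1

variable (G) in
/-- The Lie bracket on `𝔤 = T_e G`. -/
def bra (x y : E) : E := adCLM G x y

variable (G) in
/-- The coadjoint action: `(coadW G x ξ) y = ξ ⁅y, x⁆`, i.e. `ad_x^* ξ`. -/
def coadW (x : E) (ξ : E →L[ℝ] ℝ) : E →L[ℝ] ℝ := ξ.comp ((adCLM G).flip x)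


/-- Multiplicativity of a field of subspaces `D(g) ⊆ T_g G ⊕ T_g^* G`: group multiplication
is a forward Dirac map. -/
def MultDirac (D : G → Submodule ℝ (E × (E →L[ℝ] ℝ))) : Prop :=
  ∀ g h : G, ∀ p ∈ D (g * h), ∃ w u : E, ∃ β γ : E →L[ℝ] ℝ,
    (w, β) ∈ D g ∧ (u, γ) ∈ D h ∧ dR h g w + dL g h u = p.1 ∧
    β = p.2.comp (dR h g) ∧ γ = p.2.comp (dL g h)

/-- `𝔤₀ = G₀(e)`, the kernel of the Dirac structure at the neutral element. -/
def g0set (D : G → Submodule ℝ (E × (E →L[ℝ] ℝ))) : Set E := {x | (x, 0) ∈ D 1}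

/-- `𝔭₁ = P₁(e)`, the characteristic codistribution at the neutral element. -/
def p1set (D : G → Submodule ℝ (E × (E →L[ℝ] ℝ))) : Set (E →L[ℝ] ℝ) :=
  {ξ | ∃ x, (x, ξ) ∈ D 1}

/-- A smooth vector field `X = X_ξ` such that `(X_ξ, ξ^L)` is a section of `D`. -/
def SmoothSec (D : G → Submodule ℝ (E × (E →L[ℝ] ℝ))) (ξ : E →L[ℝ] ℝ) (X : G → E) : Prop :=
  ContMDiff 𝓘(ℝ, E) 𝓘(ℝ, E) (⊤ : ℕ∞) X ∧ ∀ g, (X g, leftForm ξ g) ∈ D g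

/-- `p1br η X_ξ = [ξ, η] = d_e (η^L (X_ξ))`, the bracket of `ξ, η ∈ 𝔭₁` computed with a
choice of vector field `X_ξ`. -/
def p1br (η : E →L[ℝ] ℝ) (X : G → E) : E →L[ℝ] ℝ := d1 (fun g => leftForm η g (X g))

/-- `z ∈ 𝔤` represents `ad_η^* x ∈ 𝔤/𝔤₀ = 𝔭₁^*`, which is defined by
`(ad_η^* x)(θ) = [θ, η](x)`. -/
def RepAdStar (D : G → Submodule ℝ (E × (E →L[ℝ] ℝ))) (η : E →L[ℝ] ℝ) (x z : E) : Prop :=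
  ∀ θ ∈ p1set D, ∀ Xθ : G → E, SmoothSec D θ Xθ → θ z = p1br η Xθ x

/-- A one-parameter subgroup `c` of `G` with derivative `x` at `0` (playing the role of
`t ↦ exp (t x)`). -/
def OneParam (c : ℝ → G) (x : E) : Prop :=
  ContMDiff 𝓘(ℝ, ℝ) 𝓘(ℝ, E) (⊤ : ℕ∞) c ∧ c 0 = 1 ∧ (∀ s t : ℝ, c (s + t) = c s * c t) ∧
    (id (mfderiv 𝓘(ℝ, ℝ) 𝓘(ℝ, E) c 0 (1 : ℝ)) : E) = x

section Courant

variable {F : Type*} [NormedAddCommGroup F] [NormedSpace ℝ F]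
variable {M : Type*} [TopologicalSpace M] [ChartedSpace F M]

/-- The Lie bracket of two vector fields, computed in the trivialization of the tangent
bundle given by the identification `TangentSpace 𝓘(ℝ,F) m = F`. -/
def vLie (X Y : M → F) (m : M) : F :=
  (id (mfderiv 𝓘(ℝ, F) 𝓘(ℝ, F) Y m (X m)) : F) -
    (id (mfderiv 𝓘(ℝ, F) 𝓘(ℝ, F) X m (Y m)) : F)

/-- The Lie derivative `£_X β` of a one-form `β` along a vector field `X`, in the same
trivialization. -/
def lieDform (X : M → F) (β : M → (F →L[ℝ] ℝ)) (m : M) : F →L[ℝ] ℝ :=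
  (id (mfderiv 𝓘(ℝ, F) 𝓘(ℝ, F →L[ℝ] ℝ) β m (X m)) : F →L[ℝ] ℝ) +
    (β m).comp (id (mfderiv 𝓘(ℝ, F) 𝓘(ℝ, F) X m) : F →L[ℝ] F)

/-- The contraction `i_Y dα`, in the same trivialization. -/
def iotaDform (Y : M → F) (α : M → (F →L[ℝ] ℝ)) (m : M) : F →L[ℝ] ℝ :=
  (id (mfderiv 𝓘(ℝ, F) 𝓘(ℝ, F →L[ℝ] ℝ) α m (Y m)) : F →L[ℝ] ℝ) -
    (id (mfderiv 𝓘(ℝ, F) 𝓘(ℝ, F →L[ℝ] ℝ) α m) : F →L[ℝ] (F →L[ℝ] ℝ)).flip (Y m)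

/-- Integrability of a Dirac structure: closure of the space of smooth sections under the
Courant–Dorfman bracket `[(X,α),(Y,β)] = ([X,Y], £_X β − i_Y dα)`. -/
def CourantClosed (D : M → Submodule ℝ (F × (F →L[ℝ] ℝ))) : Prop :=
  ∀ (X Y : M → F) (α β : M → (F →L[ℝ] ℝ)),
    ContMDiff 𝓘(ℝ, F) 𝓘(ℝ, F) (⊤ : ℕ∞) X → ContMDiff 𝓘(ℝ, F) 𝓘(ℝ, F →L[ℝ] ℝ) (⊤ : ℕ∞) α →
    ContMDiff 𝓘(ℝ, F) 𝓘(ℝ, F) (⊤ : ℕ∞) Y → ContMDiff 𝓘(ℝ, F) 𝓘(ℝ, F →L[ℝ] ℝ) (⊤ : ℕ∞) β →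
    (∀ m, (X m, α m) ∈ D m) → (∀ m, (Y m, β m) ∈ D m) →
    ∀ m, (vLie X Y m, lieDform X β m - iotaDform Y α m) ∈ D m

end Courant

namespace IsLagr

variable {V : Type*} [NormedAddCommGroup V] [NormedSpace ℝ V] {D : Submodule ℝ (V × (V →L[ℝ] ℝ))}

theorem isClosed (hD : IsLagr D) : IsClosed (D : Set (V × (V →L[ℝ] ℝ))) := by
  have hD' : (D : Set (V × (V →L[ℝ] ℝ))) = ⋂ q ∈ D, {p | p.2 q.1 + q.2 p.1 = 0} := by
    ext p
    simp [hD p]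
  rw [hD']
  exact isClosed_biInter fun q _ => isClosed_eq (by fun_prop) continuous_const

theorem mem_iff_snd_eq_zero (hD : IsLagr D) (h : ∀ p ∈ D, p.2 = 0) (p : V × (V →L[ℝ] ℝ)) :
    p ∈ D ↔ p.2 = 0 :=
  ⟨h p, fun hp => (hD p).2 fun q hq => by simp [hp, h q hq]⟩

theorem zero_mk_mem (hD : IsLagr D) (h : ∀ p ∈ D, p.1 = 0) (ξ : V →L[ℝ] ℝ) : ((0 : V), ξ) ∈ D :=
  (hD _).2 fun q hq => by simp [h q hq]

theorem exists_graph (hD : IsLagr D) (hker : ∀ v, (v, (0 : V →L[ℝ] ℝ)) ∈ D → v = 0)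
    (hsurj : ∀ ξ, ∃ v, (v, ξ) ∈ D) :
    ∃ π : (V →L[ℝ] ℝ) →ₗ[ℝ] V,
      (∀ ξ η : V →L[ℝ] ℝ, ξ (π η) = - η (π ξ)) ∧ ∀ p, p ∈ D ↔ p.1 = π p.2 := by
  choose f hf using hsurj
  have huniq : ∀ v ξ, (v, ξ) ∈ D → v = f ξ := fun v ξ h =>
    sub_eq_zero.1 (hker _ (by simpa using D.sub_mem h (hf ξ)))
  let π : (V →L[ℝ] ℝ) →ₗ[ℝ] V :=
    { toFun := f
      map_add' := fun ξ η => (huniq _ _ (by simpa using D.add_mem (hf ξ) (hf η))).symm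
      map_smul' := fun c ξ => (huniq _ _ (by simpa using D.smul_mem c (hf ξ))).symm }
  refine ⟨π, fun ξ η => ?_, fun p => ⟨fun hp => huniq _ _ hp, fun hp => ?_⟩⟩
  · have := (hD _).1 (hf ξ) _ (hf η)
    simp only at this
    change ξ (f η) = -η (f ξ)
    linarith
  · rw [← Prod.mk.eta (p := p), hp]
    exact hf p.2

end IsLagr

theorem _root_.HasFDerivAt.apply_mem_of_forall_mem {E' F : Type*} [NormedAddCommGroup E']
    [NormedSpace ℝ E'] [NormedAddCommGroup F] [NormedSpace ℝ F] {f : E' → F} {f' : E' →L[ℝ] F}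
    {S : Submodule ℝ F} (hS : IsClosed (S : Set F)) {x₀ : E'} (hd : HasFDerivAt f f' x₀)
    (hf : ∀ x, f x ∈ S) (v : E') : f' v ∈ S := by
  have hline : HasDerivAt (fun t : ℝ => x₀ + t • v) v 0 := by
    simpa using ((hasDerivAt_id (0 : ℝ)).smul_const v).const_add x₀
  have hslope := hasDerivAt_iff_tendsto_slope.1 <|
    HasFDerivAt.comp_hasDerivAt (0 : ℝ) (by simpa using hd) hline
  refine hS.mem_of_tendsto hslope (Filter.Eventually.of_forall fun t => ?_)
  exact S.smul_mem _ (S.sub_mem (hf _) (hf _))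

theorem _root_.MDifferentiableAt.mfderiv_apply_mem_of_forall_mem {H F : Type*}
    [NormedAddCommGroup H] [NormedSpace ℝ H] [NormedAddCommGroup F] [NormedSpace ℝ F] {M : Type*}
    [TopologicalSpace M] [ChartedSpace H M] {f : M → F} {S : Submodule ℝ F} (hS : IsClosed (S : Set F)) {m : M}
    (hf : MDifferentiableAt 𝓘(ℝ, H) 𝓘(ℝ, F) f m) (hmem : ∀ m, f m ∈ S) (v : H) :
    mfderiv 𝓘(ℝ, H) 𝓘(ℝ, F) f m v ∈ S := by
  have hd : HasFDerivAt (writtenInExtChartAt 𝓘(ℝ, H) 𝓘(ℝ, F) m f)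
      (mfderiv 𝓘(ℝ, H) 𝓘(ℝ, F) f m : H →L[ℝ] F) (extChartAt 𝓘(ℝ, H) m m) := by
    refine hasFDerivWithinAt_univ.1 ?_
    simpa using hf.hasMFDerivAt.2
  refine HasFDerivAt.apply_mem_of_forall_mem hS hd (fun x => ?_) v
  simpa [writtenInExtChartAt, chartAt_self_eq] using hmem _

section

omit [LieGroup 𝓘(ℝ, E) (⊤ : ℕ∞) G]

theorem dL_one (g : G) : dL (1 : G) g = ContinuousLinearMap.id ℝ E := by
  rw [dL, show ((1 : G) * ·) = id from funext one_mul, mfderiv_id]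
  rfl

theorem dR_one (g : G) : dR (1 : G) g = ContinuousLinearMap.id ℝ E := by
  rw [dR, show (· * (1 : G)) = id from funext mul_one, mfderiv_id]
  rfl

-- `mfderiv` is the junk value `0` where `Ad` is not differentiable, and then `bra G = 0`.
theorem mdifferentiableAt_Ad_one_of_exists_bra_ne_zero (h : ∃ x y : E, bra G x y ≠ 0) :
    MDifferentiableAt 𝓘(ℝ, E) 𝓘(ℝ, E →L[ℝ] E) (Ad : G → (E →L[ℝ] E)) 1 := by
  by_contra hAd
  obtain ⟨x, y, hxy⟩ := h
  exact hxy (by simp [bra, adCLM, mfderiv_zero_of_not_mdifferentiableAt hAd]; rfl)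

theorem bra_eq_mfderiv_Ad_apply
    (hAd : MDifferentiableAt 𝓘(ℝ, E) 𝓘(ℝ, E →L[ℝ] E) (Ad : G → (E →L[ℝ] E)) 1) (x y : E) :
    bra G x y = mfderiv 𝓘(ℝ, E) 𝓘(ℝ, E) (fun g : G => Ad g y) 1 x := by
  have hev : MDifferentiableAt 𝓘(ℝ, E →L[ℝ] E) 𝓘(ℝ, E) (ContinuousLinearMap.apply ℝ E y)
      (Ad (1 : G)) :=
    (ContinuousLinearMap.apply ℝ E y).differentiable.differentiableAt.mdifferentiableAt
  have hcomp := mfderiv_comp_apply (1 : G) hev hAd x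
  rw [mfderiv_eq_fderiv, (ContinuousLinearMap.apply ℝ E y).fderiv] at hcomp
  exact hcomp.symm

variable {D : G → Submodule ℝ (E × (E →L[ℝ] ℝ))}

omit [TopologicalSpace G] [ChartedSpace E G] in
def g0Submodule (D : G → Submodule ℝ (E × (E →L[ℝ] ℝ))) : Submodule ℝ E :=
  (D 1).comap (LinearMap.inl ℝ E (E →L[ℝ] ℝ))

omit [TopologicalSpace G] [ChartedSpace E G] in
@[simp]
theorem mem_g0Submodule {x : E} : x ∈ g0Submodule D ↔ (x, 0) ∈ D 1 :=
  Iff.rfl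

omit [TopologicalSpace G] [ChartedSpace E G] in
theorem isClosed_g0Submodule (hLag : ∀ g : G, IsLagr (D g)) :
    IsClosed (g0Submodule D : Set E) :=
  (hLag 1).isClosed.preimage (by fun_prop : Continuous fun x : E => (x, (0 : E →L[ℝ] ℝ)))

theorem MultDirac.mk_mem_mul (hLag : ∀ g : G, IsLagr (D g)) (hMult : MultDirac D) {g h : G}
    {w u : E} {ξ : E →L[ℝ] ℝ} (hw : (w, ξ.comp (dR h g)) ∈ D g)
    (hu : (u, ξ.comp (dL g h)) ∈ D h) : (dR h g w + dL g h u, ξ) ∈ D (g * h) := by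
  refine (hLag (g * h) _).2 fun q hq => ?_
  obtain ⟨w', u', β, γ, hw', hu', hsum, rfl, rfl⟩ := hMult g h q hq
  have h1 := (hLag g _).1 hw _ hw'
  have h2 := (hLag h _).1 hu _ hu'
  simp only [ContinuousLinearMap.comp_apply] at h1 h2
  simp only [← hsum, map_add]
  linarith

theorem MultDirac.dL_mem_of_mem_g0Submodule (hLag : ∀ g : G, IsLagr (D g)) (hMult : MultDirac D)
    (g : G) {x : E} (hx : x ∈ g0Submodule D) : (dL g 1 x, 0) ∈ D g := by
  simpa using hMult.mk_mem_mul hLag (g := g) (h := 1) (w := 0) (ξ := 0)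
    (by simp [Prod.mk_zero_zero]) (by simpa using hx)

theorem MultDirac.dL_inv_mem_g0Submodule (hLag : ∀ g : G, IsLagr (D g)) (hMult : MultDirac D)
    {g : G} {w : E} (hw : (w, 0) ∈ D g) : dL g⁻¹ g w ∈ g0Submodule D := by
  simpa using hMult.mk_mem_mul hLag (g := g⁻¹) (h := g) (w := 0) (ξ := 0)
    (by simp [Prod.mk_zero_zero]) (by simpa using hw)

theorem MultDirac.mem_g0Submodule_of_mem_one (hLag : ∀ g : G, IsLagr (D g)) (hMult : MultDirac D)
    {v : E} {ξ : E →L[ℝ] ℝ} (h : (v, ξ) ∈ D 1) : v ∈ g0Submodule D := by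
  have h2 : (v + v, ξ) ∈ D 1 := by
    simpa [dR_one, dL_one] using
      hMult.mk_mem_mul hLag (g := 1) (h := 1) (by simpa [dR_one] using h)
        (by simpa [dL_one] using h)
  simpa using (D 1).sub_mem h2 h

theorem MultDirac.graph_mul (hMult : MultDirac D) {π : G → ((E →L[ℝ] ℝ) →ₗ[ℝ] E)}
    (hπ : ∀ g p, p ∈ D g ↔ p.1 = π g p.2) (g h : G) (ξ : E →L[ℝ] ℝ) :
    π (g * h) ξ = dR h g (π g (ξ.comp (dR h g))) + dL g h (π h (ξ.comp (dL g h))) := by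
  obtain ⟨w, u, -, -, hw, hu, hsum, rfl, rfl⟩ := hMult g h (π (g * h) ξ, ξ) ((hπ _ _).2 rfl)
  simp only at hsum hw hu
  rw [← hsum, show w = _ from (hπ g _).1 hw, show u = _ from (hπ h _).1 hu]

end

theorem dL_apply_dL (a b h : G) (v : E) : dL a (b * h) (dL b h v) = dL (a * b) h v := by
  have hcomp := mfderiv_comp_apply (I := 𝓘(ℝ, E)) (I' := 𝓘(ℝ, E)) (I'' := 𝓘(ℝ, E)) h
    (mdifferentiableAt_mul_left (a := a)) (mdifferentiableAt_mul_left (a := b)) v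
  have hfun : ((a * ·) ∘ (b * ·) : G → G) = ((a * b) * ·) := by
    funext x
    simp [mul_assoc]
  rw [hfun] at hcomp
  exact hcomp.symm

theorem dR_apply_dR (a b g : G) (v : E) : dR b (g * a) (dR a g v) = dR (a * b) g v := by
  have hcomp := mfderiv_comp_apply (I := 𝓘(ℝ, E)) (I' := 𝓘(ℝ, E)) (I'' := 𝓘(ℝ, E)) g
    (mdifferentiableAt_mul_right (a := b)) (mdifferentiableAt_mul_right (a := a)) v
  have hfun : ((· * b) ∘ (· * a) : G → G) = (· * (a * b)) := by
    funext x
    simp [mul_assoc]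
  rw [hfun] at hcomp
  exact hcomp.symm

theorem dL_dL_inv (g : G) (v : E) : dL g 1 (dL g⁻¹ g v) = v := by
  rw [show (1 : G) = g⁻¹ * g from (inv_mul_cancel g).symm, dL_apply_dL, mul_inv_cancel, dL_one,
    ContinuousLinearMap.id_apply]

theorem dR_dR_inv (g : G) (v : E) : dR g 1 (dR g⁻¹ g v) = v := by
  rw [show (1 : G) = g * g⁻¹ from (mul_inv_cancel g).symm, dR_apply_dR, inv_mul_cancel, dR_one,
    ContinuousLinearMap.id_apply]

theorem Ad_apply (g : G) (v : E) : Ad g v = dR g⁻¹ g (dL g 1 v) := by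
  have hcomp := mfderiv_comp_apply (I := 𝓘(ℝ, E)) (I' := 𝓘(ℝ, E)) (I'' := 𝓘(ℝ, E)) (1 : G)
    (mdifferentiableAt_mul_right (a := g⁻¹)) (mdifferentiableAt_mul_left (a := g)) v
  rw [mul_one] at hcomp
  exact hcomp

section

variable {D : G → Submodule ℝ (E × (E →L[ℝ] ℝ))}

theorem MultDirac.Ad_mem_g0Submodule (hLag : ∀ g : G, IsLagr (D g)) (hMult : MultDirac D)
    (g : G) {x : E} (hx : x ∈ g0Submodule D) : Ad g x ∈ g0Submodule D := by
  rw [mem_g0Submodule, Ad_apply]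
  simpa using hMult.mk_mem_mul hLag (g := g) (h := g⁻¹) (u := 0) (ξ := 0)
    (by simpa using hMult.dL_mem_of_mem_g0Submodule hLag g hx) (by simp [Prod.mk_zero_zero])

theorem MultDirac.bra_mem_g0Submodule (hLag : ∀ g : G, IsLagr (D g)) (hMult : MultDirac D)
    (hAd : MDifferentiableAt 𝓘(ℝ, E) 𝓘(ℝ, E →L[ℝ] E) (Ad : G → (E →L[ℝ] E)) 1) (x : E) {y : E}
    (hy : y ∈ g0Submodule D) : bra G x y ∈ g0Submodule D := by
  rw [bra_eq_mfderiv_Ad_apply hAd]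
  exact (hAd.clm_apply mdifferentiableAt_const).mfderiv_apply_mem_of_forall_mem
    (isClosed_g0Submodule hLag) (fun g => hMult.Ad_mem_g0Submodule hLag g hy) x

theorem MultDirac.exists_mem_of_forall_exists_mem_one (hMult : MultDirac D)
    (h1 : ∀ ξ : E →L[ℝ] ℝ, ∃ v, (v, ξ) ∈ D 1) (g : G) (ξ : E →L[ℝ] ℝ) : ∃ w, (w, ξ) ∈ D g := by
  obtain ⟨v, hv⟩ := h1 (ξ.comp (dR g 1))
  obtain ⟨w, -, -, -, hw, -, -, rfl, -⟩ :=
    hMult g g⁻¹ (v, ξ.comp (dR g 1)) (by rwa [mul_inv_cancel])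
  refine ⟨w, ?_⟩
  convert hw using 2
  ext v
  simp [dR_dR_inv]

theorem MultDirac.exists_bivector_of_g0Submodule_eq_bot (hLag : ∀ g : G, IsLagr (D g))
    (hMult : MultDirac D) (hbot : g0Submodule D = ⊥) :
    ∃ π : G → ((E →L[ℝ] ℝ) →ₗ[ℝ] E),
      (∀ (g : G) (ξ η : E →L[ℝ] ℝ), ξ (π g η) = - η (π g ξ)) ∧
      (∀ (g h : G) (ξ : E →L[ℝ] ℝ),
        π (g * h) ξ = dR h g (π g (ξ.comp (dR h g))) + dL g h (π h (ξ.comp (dL g h)))) ∧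
      (∀ (g : G) (p : E × (E →L[ℝ] ℝ)), p ∈ D g ↔ p.1 = π g p.2) := by
  have hker (g : G) (w : E) (hw : (w, 0) ∈ D g) : w = 0 := by
    have hw' : dL g⁻¹ g w = 0 := by simpa [hbot] using hMult.dL_inv_mem_g0Submodule hLag hw
    simpa [hw'] using (dL_dL_inv g w).symm
  have hone (p) (hp : p ∈ D 1) : p.1 = 0 := by
    simpa [hbot] using hMult.mem_g0Submodule_of_mem_one hLag hp
  have hsurj := hMult.exists_mem_of_forall_exists_mem_one fun ξ => ⟨0, (hLag 1).zero_mk_mem hone ξ⟩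
  choose π hπ using fun g => (hLag g).exists_graph (hker g) (hsurj g)
  exact ⟨π, fun g => (hπ g).1, hMult.graph_mul fun g => (hπ g).2, fun g => (hπ g).2⟩

theorem MultDirac.snd_eq_zero_of_g0Submodule_eq_top (hLag : ∀ g : G, IsLagr (D g))
    (hMult : MultDirac D) (htop : g0Submodule D = ⊤) {g : G} {p : E × (E →L[ℝ] ℝ)}
    (hp : p ∈ D g) : p.2 = 0 := by
  obtain ⟨-, u, -, -, -, hu, -, -, rfl⟩ := hMult g 1 p (by rwa [mul_one])
  have hcomp : p.2.comp (dL g 1) = 0 := by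
    ext x
    have hx : (x, 0) ∈ D 1 := mem_g0Submodule.1 (htop ▸ Submodule.mem_top)
    simpa using (hLag 1 _).1 hx _ hu
  ext v
  simpa [dL_dL_inv] using DFunLike.congr_fun hcomp (dL g⁻¹ g v)

end

theorem simple_dirac_lie_group_dichotomy
    (D : G → Submodule ℝ (E × (E →L[ℝ] ℝ)))
    (hLag : ∀ g : G, IsLagr (D g)) (hMult : MultDirac D)
    (hsimple₁ : ∀ I : Submodule ℝ E, (∀ x : E, ∀ y ∈ I, bra G x y ∈ I) → I = ⊥ ∨ I = ⊤)
    (hsimple₂ : ∃ x y : E, bra G x y ≠ 0) :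
    (∃ π : G → ((E →L[ℝ] ℝ) →ₗ[ℝ] E),
      (∀ (g : G) (ξ η : E →L[ℝ] ℝ), ξ (π g η) = - η (π g ξ)) ∧
      (∀ (g h : G) (ξ : E →L[ℝ] ℝ),
        π (g * h) ξ = dR h g (π g (ξ.comp (dR h g))) + dL g h (π h (ξ.comp (dL g h)))) ∧
      (∀ (g : G) (p : E × (E →L[ℝ] ℝ)), p ∈ D g ↔ p.1 = π g p.2)) ∨
    (∀ (g : G) (p : E × (E →L[ℝ] ℝ)), p ∈ D g ↔ p.2 = 0) := by
  have hAd := mdifferentiableAt_Ad_one_of_exists_bra_ne_zero hsimple₂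
  rcases hsimple₁ (g0Submodule D) (fun x _ hy => hMult.bra_mem_g0Submodule hLag hAd x hy) with
    hbot | htop
  · exact Or.inl (hMult.exists_bivector_of_g0Submodule_eq_bot hLag hbot)
  · exact Or.inr fun g =>
      (hLag g).mem_iff_snd_eq_zero fun _ hp => hMult.snd_eq_zero_of_g0Submodule_eq_top hLag htop hp

end DiracPaper
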